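/- arXiv:2109.09709 — 3 statements merged into one kernel-verified Lean document; each statement's English description precedes it below -/
import Mathlib

section
/- Conditional KL bounds: for jointly distributed X ∈ S_X, Y ∈ S_Y, log(1/π_X(S_X)) ≤ D((X,Y)‖π_X×π_Y) − D(Y‖π_Y) ≤ log(1/inf_s π_X(s)). -/
/-!
Pointwise, `p log (p / (πX πY)) = p log (p / (πX p_Y)) + p log (p_Y / πY)`, and summing the last
term over `x` gives `D(Y‖πY)`; so the difference is the divergence of `p` from `πX ⊗ p_Y`.
Gibbs' inequality `a - q ≤ a log (a / q)` against the normalised reference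
`πX ⊗ p_Y / πX(S_X)` bounds it below by `-log πX(S_X)`, and
`p(x,y) ≤ p_Y(y) ≤ p_Y(y) πX(x) / inf πX` bounds the log-ratio above by `-log inf πX`.
-/

open scoped ENNReal

/-- The Kullback-Leibler divergence `D(μ‖π)` of a (sub)probability mass function `μ` relative to
a reference measure `π` on a countable set, valued in the extended reals.  The conventions
`0·log(0/·) = 0` and `μ s > π s = 0 ⇒ D = +∞` are built in; the sum is split into its positive
and negative parts so that divergence to `±∞` is handled correctly. -/
noncomputable def klDiv {S : Type*} (μ : S → ℝ≥0∞) (π : S → ℝ≥0∞) : EReal :=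
  ((∑' s, if π s = 0 ∧ μ s ≠ 0 then (⊤ : ℝ≥0∞)
      else ENNReal.ofReal ((μ s).toReal * Real.log ((μ s).toReal / (π s).toReal)) : ℝ≥0∞) : EReal)
  - ((∑' s, ENNReal.ofReal (-((μ s).toReal * Real.log ((μ s).toReal / (π s).toReal))) : ℝ≥0∞) : EReal)

/-- The conditional distribution of `X` given `Y = y`, for a joint pmf `p` on `S_X × S_Y`. -/
noncomputable def condDist {SX SY : Type*} (p : PMF (SX × SY)) (y : SY) : SX → ℝ≥0∞ :=
  fun x => p (x, y) / (p.map Prod.snd) y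

/-- `E_y [D(X|Y=y ‖ πX)]`: the expectation, over the marginal distribution of `Y`,
of the KL divergence of the conditional distribution of `X` given `Y = y` relative to `πX`. -/
noncomputable def condKL {SX SY : Type*} (p : PMF (SX × SY)) (πX : SX → ℝ≥0∞) : EReal :=
  ∑' y, (((p.map Prod.snd) y : ℝ≥0∞) : EReal) * klDiv (condDist p y) πX

/-- The mutual information `I(X;Y) = D(P_{(X,Y)} ‖ P_X × P_Y)` of a joint pmf `p`. -/
noncomputable def mutualInfo {SX SY : Type*} (p : PMF (SX × SY)) : EReal :=
  klDiv (⇑p) (fun z => (p.map Prod.fst) z.1 * (p.map Prod.snd) z.2)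

noncomputable def klSummand {S : Type*} (μ π : S → ℝ≥0∞) (s : S) : ℝ :=
  (μ s).toReal * Real.log ((μ s).toReal / (π s).toReal)

lemma Real.sub_le_mul_log_div {a q : ℝ} (ha : 0 ≤ a) (hq : 0 < q) :
    a - q ≤ a * Real.log (a / q) := by
  rcases ha.eq_or_lt with rfl | ha
  · simp [hq.le]
  have h := Real.one_sub_inv_le_log_of_pos (div_pos ha hq)
  rw [inv_div] at h
  calc a - q = a * (1 - q / a) := by field_simp
    _ ≤ a * Real.log (a / q) := mul_le_mul_of_nonneg_left h ha.le

section PosNegParts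

variable {ι : Type*} {w : ι → ℝ}

lemma summable_of_tsum_ofReal_ne_top (hpos : ∑' i, ENNReal.ofReal (w i) ≠ ⊤)
    (hneg : ∑' i, ENNReal.ofReal (-w i) ≠ ⊤) : Summable w := by
  refine ((ENNReal.summable_toReal hpos).sub (ENNReal.summable_toReal hneg)).congr fun i => ?_
  simp only [ENNReal.toReal_ofReal', max_zero_sub_max_neg_zero_eq_self]

lemma EReal.coe_tsum_eq_sub_of_summable (hw : Summable w) :
    ((∑' i, w i : ℝ) : EReal) = ((∑' i, ENNReal.ofReal (w i) : ℝ≥0∞) : EReal)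
      - ((∑' i, ENNReal.ofReal (-w i) : ℝ≥0∞) : EReal) := by
  have hpos : Summable fun i => max (w i) 0 :=
    hw.abs.of_nonneg_of_le (fun _ => le_max_right _ _) fun _ =>
      max_le (le_abs_self _) (abs_nonneg _)
  have hneg : Summable fun i => max (-w i) 0 :=
    hw.abs.of_nonneg_of_le (fun _ => le_max_right _ _) fun _ =>
      max_le (neg_le_abs _) (abs_nonneg _)
  have hofReal (v : ι → ℝ) :
      ∑' i, ENNReal.ofReal (v i) = ∑' i, ENNReal.ofReal (max (v i) 0) :=
    tsum_congr fun i => by rw [ENNReal.ofReal_max, ENNReal.ofReal_zero, max_eq_left zero_le]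
  rw [hofReal, hofReal fun i => -w i,
    ← ENNReal.ofReal_tsum_of_nonneg (fun _ => le_max_right _ _) hpos,
    ← ENNReal.ofReal_tsum_of_nonneg (fun _ => le_max_right _ _) hneg, EReal.coe_ennreal_ofReal,
    EReal.coe_ennreal_ofReal, max_eq_left (tsum_nonneg fun _ => le_max_right _ _),
    max_eq_left (tsum_nonneg fun _ => le_max_right _ _), ← EReal.coe_sub, ← hpos.tsum_sub hneg]
  simp only [max_zero_sub_max_neg_zero_eq_self]

end PosNegParts

section KLDiv

variable {S : Type*} {μ π : S → ℝ≥0∞}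

lemma klDiv_eq_sub : klDiv μ π =
    ((∑' s, if π s = 0 ∧ μ s ≠ 0 then ⊤
        else ENNReal.ofReal (klSummand μ π s) : ℝ≥0∞) : EReal)
      - ((∑' s, ENNReal.ofReal (-klSummand μ π s) : ℝ≥0∞) : EReal) :=
  rfl

lemma klSummand_of_right_eq_zero {s : S} (h : π s = 0) : klSummand μ π s = 0 := by
  simp [klSummand, h]

lemma klDiv_le_coe_tsum {w : S → ℝ} (hac : ∀ s, π s = 0 → μ s = 0)
    (hle : ∀ s, klSummand μ π s ≤ w s) (hw : Summable w) :
    klDiv μ π ≤ ((∑' s, w s : ℝ) : EReal) := by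
  rw [klDiv_eq_sub, EReal.coe_tsum_eq_sub_of_summable hw]
  refine EReal.sub_le_sub
    (EReal.coe_ennreal_le_coe_ennreal_iff.2 (ENNReal.tsum_le_tsum fun s => ?_))
    (EReal.coe_ennreal_le_coe_ennreal_iff.2 (ENNReal.tsum_le_tsum fun s =>
      ENNReal.ofReal_le_ofReal (neg_le_neg (hle s))))
  rw [if_neg fun h => h.2 (hac s h.1)]
  exact ENNReal.ofReal_le_ofReal (hle s)

/-- Where `π s = 0 < μ s` the summand of `klDiv` is `⊤`, so no lower bound is needed there. -/
lemma coe_tsum_le_klDiv {w : S → ℝ}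
    (hle : ∀ s, (π s = 0 → μ s = 0) → w s ≤ klSummand μ π s) (hw : Summable w) :
    ((∑' s, w s : ℝ) : EReal) ≤ klDiv μ π := by
  rw [klDiv_eq_sub, EReal.coe_tsum_eq_sub_of_summable hw]
  refine EReal.sub_le_sub
    (EReal.coe_ennreal_le_coe_ennreal_iff.2 (ENNReal.tsum_le_tsum fun s => ?_))
    (EReal.coe_ennreal_le_coe_ennreal_iff.2 (ENNReal.tsum_le_tsum fun s => ?_))
  · split_ifs with h
    · exact le_top
    · exact ENNReal.ofReal_le_ofReal (hle s fun h0 => not_not.1 fun hne => h ⟨h0, hne⟩)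
  · by_cases h : π s = 0 → μ s = 0
    · exact ENNReal.ofReal_le_ofReal (neg_le_neg (hle s h))
    · rw [klSummand_of_right_eq_zero (Classical.not_imp.1 h).1, neg_zero, ENNReal.ofReal_zero]
      exact zero_le

lemma klDiv_eq_coe_tsum (hac : ∀ s, π s = 0 → μ s = 0) (hsum : Summable (klSummand μ π)) :
    klDiv μ π = ((∑' s, klSummand μ π s : ℝ) : EReal) :=
  le_antisymm (klDiv_le_coe_tsum hac (fun _ => le_rfl) hsum)
    (coe_tsum_le_klDiv (fun _ _ => le_rfl) hsum)

lemma tsum_ofReal_neg_klSummand_ne_top_of_klDiv_ne_bot (hbot : klDiv μ π ≠ ⊥) :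
    ∑' s, ENNReal.ofReal (-klSummand μ π s) ≠ ⊤ := by
  intro h
  rw [klDiv_eq_sub, h, EReal.coe_ennreal_top, EReal.sub_top] at hbot
  exact hbot rfl

lemma tsum_ite_klSummand_ne_top_of_klDiv_ne_bot_of_ne_top (hbot : klDiv μ π ≠ ⊥)
    (htop : klDiv μ π ≠ ⊤) :
    (∑' s, if π s = 0 ∧ μ s ≠ 0 then ⊤
      else ENNReal.ofReal (klSummand μ π s)) ≠ ⊤ := by
  intro h
  have hneg := tsum_ofReal_neg_klSummand_ne_top_of_klDiv_ne_bot hbot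
  rw [klDiv_eq_sub, h, EReal.coe_ennreal_top, ← ENNReal.ofReal_toReal hneg,
    EReal.coe_ennreal_ofReal, max_eq_left ENNReal.toReal_nonneg, EReal.top_sub_coe] at htop
  exact htop rfl

lemma absolutelyContinuous_of_klDiv_ne_bot_of_ne_top (hbot : klDiv μ π ≠ ⊥)
    (htop : klDiv μ π ≠ ⊤) (s : S) (hs : π s = 0) : μ s = 0 := by
  by_contra hμ
  refine tsum_ite_klSummand_ne_top_of_klDiv_ne_bot_of_ne_top hbot htop (eq_top_iff.2 ?_)
  calc (⊤ : ℝ≥0∞)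
        = if π s = 0 ∧ μ s ≠ 0 then ⊤ else ENNReal.ofReal (klSummand μ π s) :=
          (if_pos ⟨hs, hμ⟩).symm
    _ ≤ _ := ENNReal.le_tsum s

lemma summable_klSummand_of_klDiv_ne_bot_of_ne_top (hbot : klDiv μ π ≠ ⊥)
    (htop : klDiv μ π ≠ ⊤) : Summable (klSummand μ π) := by
  refine summable_of_tsum_ofReal_ne_top ?_
    (tsum_ofReal_neg_klSummand_ne_top_of_klDiv_ne_bot hbot)
  have hac := absolutelyContinuous_of_klDiv_ne_bot_of_ne_top hbot htop
  have h := tsum_ite_klSummand_ne_top_of_klDiv_ne_bot_of_ne_top hbot htop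
  rwa [tsum_congr fun s => if_neg fun h : π s = 0 ∧ μ s ≠ 0 => h.2 (hac s h.1)] at h

end KLDiv

namespace PMF

lemma hasSum_toReal {γ : Type*} (q : PMF γ) : HasSum (fun c => (q c).toReal) 1 := by
  have h := ENNReal.hasSum_toReal (f := q) (by rw [q.tsum_coe]; exact ENNReal.one_ne_top)
  rwa [← ENNReal.tsum_toReal_eq q.apply_ne_top, q.tsum_coe, ENNReal.toReal_one] at h

lemma tsum_mul_apply_snd {α γ : Type*} (q : PMF γ) (f : α → ℝ≥0∞) :
    ∑' z : α × γ, f z.1 * q z.2 = ∑' x, f x := by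
  rw [ENNReal.tsum_prod']
  simp only [ENNReal.tsum_mul_left, q.tsum_coe, mul_one]

variable {α β : Type*} (p : PMF (α × β))

lemma map_snd_apply (y : β) : p.map Prod.snd y = ∑' x, p (x, y) := by
  rw [PMF.map_apply, ENNReal.tsum_prod']
  refine tsum_congr fun x => ?_
  rw [tsum_eq_single y fun b hb => if_neg fun h => hb h.symm, if_pos rfl]

lemma apply_le_map_snd (z : α × β) : p z ≤ p.map Prod.snd z.2 := by
  rw [map_snd_apply]
  exact ENNReal.le_tsum z.1

lemma tsum_mul_map_snd (g : β → ℝ≥0∞) :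
    ∑' z, p z * g z.2 = ∑' y, p.map Prod.snd y * g y := by
  rw [ENNReal.tsum_prod', ENNReal.tsum_comm]
  exact tsum_congr fun y => by dsimp only; rw [ENNReal.tsum_mul_right, map_snd_apply]

lemma hasSum_toReal_mul_map_snd {f : β → ℝ}
    (hf : Summable fun y => (p.map Prod.snd y).toReal * f y) :
    HasSum (fun z => (p z).toReal * f z.2) (∑' y, (p.map Prod.snd y).toReal * f y) := by
  have habs : Summable fun z => (p z).toReal * |f z.2| := by
    have hterm (y : β) : p.map Prod.snd y * ENNReal.ofReal |f y|
        = ENNReal.ofReal ((p.map Prod.snd y).toReal * |f y|) := by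
      rw [ENNReal.ofReal_mul ENNReal.toReal_nonneg, ENNReal.ofReal_toReal (apply_ne_top _ _)]
    have hfin : ∑' z, p z * ENNReal.ofReal |f z.2| ≠ ⊤ := by
      rw [tsum_mul_map_snd p fun y => ENNReal.ofReal |f y|, tsum_congr hterm,
        ← ENNReal.ofReal_tsum_of_nonneg (fun _ => by positivity)
          (by simpa only [abs_mul, ENNReal.abs_toReal] using hf.abs)]
      exact ENNReal.ofReal_ne_top
    simpa only [ENNReal.toReal_mul, ENNReal.toReal_ofReal (abs_nonneg _)] using
      ENNReal.summable_toReal hfin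
  have hs : Summable fun z => (p z).toReal * f z.2 :=
    Summable.of_norm (by simpa only [Real.norm_eq_abs, abs_mul, ENNReal.abs_toReal] using habs)
  refine hs.hasSum_iff.2 ?_
  rw [hs.tsum_prod, ← hs.tsum_comm]
  refine tsum_congr fun y => ?_
  dsimp only
  rw [tsum_mul_right, ← ENNReal.tsum_toReal_eq fun x => p.apply_ne_top _, map_snd_apply]

end PMF

section ProductReference

variable {α β : Type*} (p : PMF (α × β)) {πX : α → ℝ≥0∞} {πY : β → ℝ≥0∞}

lemma hasSum_toReal_mul_log_div_sub (hsum : Summable (klSummand (p.map Prod.snd) πY)) (d : ℝ) :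
    HasSum (fun z => (p z).toReal
        * (Real.log ((p.map Prod.snd z.2).toReal / (πY z.2).toReal) - d))
      (∑' y, klSummand (p.map Prod.snd) πY y - d) := by
  have hf := hsum.hasSum.sub (((p.map Prod.snd).hasSum_toReal).mul_right d)
  rw [one_mul] at hf
  have h := p.hasSum_toReal_mul_map_snd (f := fun y =>
    Real.log ((p.map Prod.snd y).toReal / (πY y).toReal) - d)
    (by simpa only [klSummand, mul_sub] using hf.summable)
  convert h using 1
  rw [← hf.tsum_eq]
  exact tsum_congr fun y => by simp only [klSummand, mul_sub]

lemma hasSum_toReal_mul_map_snd_toReal (hπX : ∀ x, πX x ≠ ⊤) (hS : ∑' x, πX x ≠ ⊤) :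
    HasSum (fun z : α × β => (πX z.1).toReal * (p.map Prod.snd z.2).toReal)
      (∑' x, πX x).toReal := by
  have hfin : ∀ z : α × β, πX z.1 * p.map Prod.snd z.2 ≠ ⊤ :=
    fun z => ENNReal.mul_ne_top (hπX _) (PMF.apply_ne_top _ _)
  have h := ENNReal.hasSum_toReal (f := fun z : α × β => πX z.1 * p.map Prod.snd z.2)
    (by rwa [PMF.tsum_mul_apply_snd])
  rw [← ENNReal.tsum_toReal_eq hfin, PMF.tsum_mul_apply_snd] at h
  simpa only [ENNReal.toReal_mul] using h

lemma klSummand_prod_apply (z : α × β) :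
    klSummand p (fun z => πX z.1 * πY z.2) z
      = (p z).toReal * Real.log ((p z).toReal / ((πX z.1).toReal * (πY z.2).toReal)) := by
  simp only [klSummand, ENNReal.toReal_mul]

lemma coe_tsum_sub_log_le_klDiv_prod (hπX : ∀ x, πX x ≠ ⊤) (hπY : ∀ y, πY y ≠ ⊤)
    (hS0 : ∑' x, πX x ≠ 0) (hS : ∑' x, πX x ≠ ⊤)
    (hsum : Summable (klSummand (p.map Prod.snd) πY)) :
    ((∑' y, klSummand (p.map Prod.snd) πY y - Real.log (∑' x, πX x).toReal : ℝ) : EReal)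
      ≤ klDiv p (fun z => πX z.1 * πY z.2) := by
  set S := (∑' x, πX x).toReal
  have hSpos : 0 < S := ENNReal.toReal_pos hS0 hS
  have hw := (hasSum_toReal_mul_log_div_sub p hsum (Real.log S)).add
    (p.hasSum_toReal.sub ((hasSum_toReal_mul_map_snd_toReal p hπX hS).div_const S))
  rw [div_self hSpos.ne', sub_self, add_zero] at hw
  rw [← hw.tsum_eq]
  refine coe_tsum_le_klDiv (fun z hz => ?_) hw.summable
  rw [klSummand_prod_apply]
  set a := (p z).toReal
  set b := (p.map Prod.snd z.2).toReal
  set u := (πX z.1).toReal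
  set t := (πY z.2).toReal
  rcases eq_or_ne (p z) 0 with hp | hp
  · have : 0 ≤ u * b / S := by positivity
    simp only [a, hp, ENNReal.toReal_zero, zero_mul, zero_add, zero_sub, zero_div]
    linarith
  obtain ⟨hu0, ht0⟩ := mul_ne_zero_iff.1 (mt hz hp)
  have ha : 0 < a := ENNReal.toReal_pos hp (PMF.apply_ne_top _ _)
  have hu : 0 < u := ENNReal.toReal_pos hu0 (hπX _)
  have ht : 0 < t := ENNReal.toReal_pos ht0 (hπY _)
  have hb : 0 < b :=
    ha.trans_le (ENNReal.toReal_mono (PMF.apply_ne_top _ _) (p.apply_le_map_snd z))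
  have hlog : Real.log (a / (u * t))
      = Real.log (a / (u * b / S)) + (Real.log (b / t) - Real.log S) := by
    rw [← Real.log_div (by positivity) hSpos.ne',
      ← Real.log_mul (by positivity) (by positivity)]
    congr 1
    field_simp
  rw [hlog, mul_add]
  linarith [Real.sub_le_mul_log_div ha.le (show 0 < u * b / S by positivity)]

lemma klDiv_prod_le_coe_tsum_sub_log (hπX : ∀ x, πX x ≠ ⊤) (hπY : ∀ y, πY y ≠ ⊤)
    (hc0 : ⨅ x, πX x ≠ 0) (hc : ⨅ x, πX x ≠ ⊤)
    (hac : ∀ y, πY y = 0 → p.map Prod.snd y = 0)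
    (hsum : Summable (klSummand (p.map Prod.snd) πY)) :
    klDiv p (fun z => πX z.1 * πY z.2)
      ≤ ((∑' y, klSummand (p.map Prod.snd) πY y - Real.log (⨅ x, πX x).toReal : ℝ)
          : EReal) := by
  have hw := hasSum_toReal_mul_log_div_sub p hsum (Real.log (⨅ x, πX x).toReal)
  rw [← hw.tsum_eq]
  have hp_of_πY (z : α × β) (h : πY z.2 = 0) : p z = 0 :=
    le_antisymm ((p.apply_le_map_snd z).trans (hac _ h).le) zero_le
  refine klDiv_le_coe_tsum (fun z hz => ?_) (fun z => ?_) hw.summable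
  · rcases mul_eq_zero.1 hz with h | h
    · exact absurd (le_antisymm ((iInf_le πX z.1).trans h.le) zero_le) hc0
    · exact hp_of_πY z h
  rw [klSummand_prod_apply]
  rcases eq_or_ne (p z) 0 with hp | hp
  · simp [hp]
  set a := (p z).toReal
  set b := (p.map Prod.snd z.2).toReal
  set u := (πX z.1).toReal
  set t := (πY z.2).toReal
  set c := (⨅ x, πX x).toReal
  have ha : 0 < a := ENNReal.toReal_pos hp (PMF.apply_ne_top _ _)
  have hab : a ≤ b := ENNReal.toReal_mono (PMF.apply_ne_top _ _) (p.apply_le_map_snd z)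
  have hc : 0 < c := ENNReal.toReal_pos hc0 hc
  have hcu : c ≤ u := ENNReal.toReal_mono (hπX _) (iInf_le πX z.1)
  have ht : 0 < t := ENNReal.toReal_pos (mt (hp_of_πY z) hp) (hπY _)
  have hb : 0 < b := ha.trans_le hab
  have hu : 0 < u := hc.trans_le hcu
  refine mul_le_mul_of_nonneg_left ?_ ha.le
  rw [← Real.log_div (by positivity) hc.ne']
  refine Real.log_le_log (by positivity) ?_
  rw [div_div, mul_comm t c]
  exact div_le_div₀ (by positivity) hab (by positivity) (mul_le_mul_of_nonneg_right hcu ht.le)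

end ProductReference

theorem kl_cond_bounds_general {SX SY : Type*}
    (p : PMF (SX × SY)) (πX : SX → ℝ≥0∞) (πY : SY → ℝ≥0∞)
    (hπXfin : ∀ x, πX x ≠ ⊤) (hπXne : ∃ x, πX x ≠ 0)
    (hπYfin : ∀ y, πY y ≠ ⊤)
    (hY_bot : klDiv (⇑(p.map Prod.snd)) πY ≠ ⊥) (hY_top : klDiv (⇑(p.map Prod.snd)) πY ≠ ⊤) :
    - ENNReal.log (∑' x, πX x)
        ≤ klDiv (⇑p) (fun z => πX z.1 * πY z.2) - klDiv (⇑(p.map Prod.snd)) πY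
    ∧ klDiv (⇑p) (fun z => πX z.1 * πY z.2) - klDiv (⇑(p.map Prod.snd)) πY
        ≤ - ENNReal.log (⨅ x, πX x) := by
  have hac := absolutelyContinuous_of_klDiv_ne_bot_of_ne_top hY_bot hY_top
  have hsum := summable_klSummand_of_klDiv_ne_bot_of_ne_top hY_bot hY_top
  set B := ∑' y, klSummand (p.map Prod.snd) πY y
  have hshift (L : ℝ) : ((B - L : ℝ) : EReal) - B = ((-L : ℝ) : EReal) := by
    rw [← EReal.coe_sub]; congr 1; ring
  rw [klDiv_eq_coe_tsum hac hsum]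
  obtain ⟨x₀, hx₀⟩ := hπXne
  constructor
  · by_cases hS : ∑' x, πX x = ⊤
    · simp [hS]
    have hS0 : ∑' x, πX x ≠ 0 := fun h => hx₀ (ENNReal.tsum_eq_zero.1 h x₀)
    rw [ENNReal.log_pos_real hS0 hS, ← EReal.coe_neg, ← hshift]
    exact EReal.sub_le_sub (coe_tsum_sub_log_le_klDiv_prod p hπXfin hπYfin hS0 hS hsum) le_rfl
  · by_cases hc0 : ⨅ x, πX x = 0
    · simp [hc0]
    have hc : ⨅ x, πX x ≠ ⊤ := ne_top_of_le_ne_top (hπXfin x₀) (iInf_le _ x₀)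
    rw [ENNReal.log_pos_real hc0 hc, ← EReal.coe_neg, ← hshift]
    exact EReal.sub_le_sub (klDiv_prod_le_coe_tsum_sub_log p hπXfin hπYfin hc0 hc hac hsum) le_rfl

/-- Conditional KL bounds: for jointly distributed `X ∈ S_X`, `Y ∈ S_Y` (joint distribution
`p`), `log(1/πX(S_X)) ≤ D((X,Y) ‖ πX×πY) − D(Y ‖ πY) ≤ log(1/inf_x πX(x))`.
The hypotheses on `D(Y‖πY)` rule out conflicting infinities in the subtraction. -/
theorem kl_cond_bounds {SX SY : Type*} [Countable SX] [Countable SY]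
    (p : PMF (SX × SY)) (πX : SX → ℝ≥0∞) (πY : SY → ℝ≥0∞)
    (hπXfin : ∀ x, πX x ≠ ⊤) (hπXne : ∃ x, πX x ≠ 0)
    (hπYfin : ∀ y, πY y ≠ ⊤) (hπYne : ∃ y, πY y ≠ 0)
    (hY_bot : klDiv (⇑(p.map Prod.snd)) πY ≠ ⊥) (hY_top : klDiv (⇑(p.map Prod.snd)) πY ≠ ⊤) :
    - ENNReal.log (∑' x, πX x)
        ≤ klDiv (⇑p) (fun z => πX z.1 * πY z.2) - klDiv (⇑(p.map Prod.snd)) πY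
    ∧ klDiv (⇑p) (fun z => πX z.1 * πY z.2) - klDiv (⇑(p.map Prod.snd)) πY
        ≤ - ENNReal.log (⨅ x, πX x) :=
  kl_cond_bounds_general p πX πY hπXfin hπXne hπYfin hY_bot hY_top
end

section
/- Second law for stochastic matrices: if μ, ν are probability measures on a countable set S, π ∈ M₊(S), and there exists a π-stochastic matrix p (stochastic matrix with Σ_{s'} π(s')p(s',s) = π(s) for all s) transforming μ into ν (i.e., Σ_{s'} μ(s')p(s',s) = ν(s) for all s), then D(μ‖π) ≥ D(ν‖π). -/
open scoped ENNReal

/-!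
The summand `μ s * log (μ s / π s)` of `D(μ‖π)` is a positively homogeneous, jointly convex function
(a perspective) of the pair `(μ s, π s)`. Applying `p` to the pair `(μ, π)` first splits each
`(μ s', π s')` along row `s'` in the proportions `p s' ·`, which by homogeneity does not change the
sum, and then merges the pieces landing in column `s` into `(ν s, π s)`; by the log-sum inequality
(convexity, via a supporting line at the merged point) merging does not increase the sum.

The sum need not converge absolutely, so everything is done with the positive and negative parts
`D⁺`, `D⁻` in `ℝ≥0∞`, in the cross form `D⁺(ν) + D⁻(μ) ≤ D⁺(μ) + D⁻(ν)`. This gives the theorem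
unless `D⁻(μ) = ∞`. In that case `D⁻(ν) = ∞` too: the negative part has a concave homogeneous
majorant exceeding it by at most `μ s`, and the same argument, with the inequality reversed, shows
that the sum of the majorant does not decrease under `p`.
-/

namespace SecondLaw

section Real

open Real

lemma mul_log_div_mul_right (x a t : ℝ) :
    x * t * log (x * t / (a * t)) = t * (x * log (x / a)) := by
  rcases eq_or_ne t 0 with rfl | ht
  · simp
  · rw [mul_div_mul_right _ _ ht]; ring

lemma sub_le_mul_log_div {x a y : ℝ} (hx : 0 ≤ x) (ha : 0 ≤ a) (hy : 0 < y)
    (hax : a = 0 → x = 0) : (log y + 1) * x - y * a ≤ x * log (x / a) := by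
  rcases hx.eq_or_lt with rfl | hx
  · simpa using mul_nonneg hy.le ha
  have ha : 0 < a := ha.lt_of_ne fun h => hx.ne' (hax h.symm)
  have hlog : 1 - (x / a / y)⁻¹ ≤ log (x / a) - log y := by
    rw [← log_div (by positivity) hy.ne']
    exact one_sub_inv_le_log_of_pos (by positivity)
  have hxy : x * (x / a / y)⁻¹ = a * y := by field_simp
  nlinarith [mul_le_mul_of_nonneg_left hlog hx.le]

/-- The perspective `x * g (a / x)` of the concave `g r = if r ≤ 1 then r else 1 + log r`. -/
noncomputable def negPartMajorant (x a : ℝ) : ℝ := if x ≤ a then x + x * log (a / x) else a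

lemma negPartMajorant_mul_right (x a : ℝ) {t : ℝ} (ht : 0 ≤ t) :
    negPartMajorant (x * t) (a * t) = t * negPartMajorant x a := by
  rcases ht.eq_or_lt with rfl | ht
  · simp [negPartMajorant]
  · simp only [negPartMajorant, mul_le_mul_iff_left₀ ht, mul_div_mul_right _ _ ht.ne']
    split_ifs <;> ring

lemma neg_mul_log_div_le_negPartMajorant {x a : ℝ} (hx : 0 ≤ x) (ha : 0 ≤ a) :
    -(x * log (x / a)) ≤ negPartMajorant x a := by
  unfold negPartMajorant
  split_ifs with hxa
  · rw [← inv_div x a, log_inv]; linarith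
  · have : 0 ≤ log (x / a) := by
      rcases ha.eq_or_lt with rfl | ha
      · simp
      · exact log_nonneg <| (one_le_div ha).2 (not_le.1 hxa).le
    nlinarith

lemma negPartMajorant_le_max_add (x a : ℝ) :
    negPartMajorant x a ≤ max (-(x * log (x / a))) 0 + x := by
  unfold negPartMajorant
  split_ifs with hxa
  · rw [← inv_div x a, log_inv]
    linarith [le_max_left (-(x * log (x / a))) 0]
  · linarith [le_max_right (-(x * log (x / a))) 0]

lemma negPartMajorant_le_right {x a : ℝ} (hx : 0 ≤ x) :
    negPartMajorant x a ≤ a := by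
  unfold negPartMajorant
  split_ifs with hxa
  · rcases hx.eq_or_lt with rfl | hx
    · simpa using hxa
    have hlog := log_le_sub_one_of_pos (div_pos (hx.trans_le hxa) hx)
    have hxa : x * (a / x) = a := by field_simp
    nlinarith [mul_le_mul_of_nonneg_left hlog hx.le]
  · exact le_rfl

lemma negPartMajorant_le_of_le {x a n q : ℝ} (hx : 0 ≤ x) (ha : 0 ≤ a) (hn : 0 < n)
    (hnq : n ≤ q) : negPartMajorant x a ≤ log (q / n) * x + n / q * a := by
  have hq : 0 < q := hn.trans_le hnq
  unfold negPartMajorant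
  split_ifs with hxa
  · rcases hx.eq_or_lt with rfl | hx
    · simp only [div_zero, log_zero, mul_zero, add_zero, zero_add, ge_iff_le]
      positivity
    have ha : 0 < a := hx.trans_le hxa
    have hlog : log (a / x) - log (q / n) ≤ a / x / (q / n) - 1 := by
      rw [← log_div (by positivity) (by positivity)]
      exact log_le_sub_one_of_pos (by positivity)
    have hxa : x * (a / x / (q / n)) = n / q * a := by field_simp
    nlinarith [mul_le_mul_of_nonneg_left hlog hx.le]
  · have hlog : 1 - n / q ≤ log (q / n) := by
      simpa using one_sub_inv_le_log_of_pos (div_pos hq hn)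
    have hnq' : 0 ≤ 1 - n / q := by rw [sub_nonneg]; exact (div_le_one hq).2 hnq
    nlinarith [mul_le_mul_of_nonneg_left (not_le.1 hxa).le hnq']

end Real

lemma ofReal_add_ofReal_neg_le {u v m : ℝ} (h : u - v ≤ m) :
    ENNReal.ofReal u + ENNReal.ofReal (-m) ≤
      ENNReal.ofReal m + (ENNReal.ofReal (-u) + ENNReal.ofReal v) := by
  rw [← ENNReal.toReal_le_toReal (by finiteness) (by finiteness)]
  simp only [ENNReal.toReal_add, ENNReal.add_ne_top, ENNReal.ofReal_ne_top, ne_eq, and_self,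
    not_false_eq_true, ENNReal.toReal_ofReal', max_def]
  split_ifs <;> linarith

lemma ofReal_add_ofReal_neg_eq {u v m : ℝ} (hv : 0 ≤ v) (h : u - v = m) :
    ENNReal.ofReal u + ENNReal.ofReal (-m) =
      ENNReal.ofReal m + (ENNReal.ofReal (-u) + ENNReal.ofReal v) := by
  rw [← ENNReal.toReal_eq_toReal_iff' (by finiteness) (by finiteness)]
  simp only [ENNReal.toReal_add, ENNReal.add_ne_top, ENNReal.ofReal_ne_top, ne_eq, and_self,
    not_false_eq_true, ENNReal.toReal_ofReal', max_def]
  split_ifs <;> linarith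

lemma ofReal_mul_of_ne_top (c : ℝ) {x : ℝ≥0∞} (hx : x ≠ ⊤) :
    ENNReal.ofReal c * x = ENNReal.ofReal (c * x.toReal) := by
  rw [ENNReal.ofReal_mul' ENNReal.toReal_nonneg, ENNReal.ofReal_toReal hx]

noncomputable def klPos (x a : ℝ≥0∞) : ℝ≥0∞ :=
  if a = 0 ∧ x ≠ 0 then ⊤ else ENNReal.ofReal (x.toReal * Real.log (x.toReal / a.toReal))

noncomputable def klNeg (x a : ℝ≥0∞) : ℝ≥0∞ :=
  ENNReal.ofReal (-(x.toReal * Real.log (x.toReal / a.toReal)))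

noncomputable def klNegMajorant (x a : ℝ≥0∞) : ℝ≥0∞ :=
  ENNReal.ofReal (negPartMajorant x.toReal a.toReal)

lemma klDiv_eq_tsum_klPos_sub_tsum_klNeg {S : Type*} (μ π : S → ℝ≥0∞) :
    klDiv μ π = ((∑' s, klPos (μ s) (π s) : ℝ≥0∞) : EReal) - (∑' s, klNeg (μ s) (π s) : ℝ≥0∞) :=
  rfl

@[simp] lemma klPos_zero_left (a : ℝ≥0∞) : klPos 0 a = 0 := by simp [klPos]

@[simp] lemma klNeg_zero_left (a : ℝ≥0∞) : klNeg 0 a = 0 := by simp [klNeg]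

@[simp] lemma klNegMajorant_zero_left (a : ℝ≥0∞) : klNegMajorant 0 a = 0 := by
  simp [klNegMajorant, negPartMajorant]

lemma klNeg_le_klNegMajorant (x a : ℝ≥0∞) : klNeg x a ≤ klNegMajorant x a :=
  ENNReal.ofReal_le_ofReal <|
    neg_mul_log_div_le_negPartMajorant ENNReal.toReal_nonneg ENNReal.toReal_nonneg

lemma klNegMajorant_le_klNeg_add {x : ℝ≥0∞} (hx : x ≠ ⊤) (a : ℝ≥0∞) :
    klNegMajorant x a ≤ klNeg x a + x := calc
  klNegMajorant x a
    ≤ ENNReal.ofReal (max (-(x.toReal * Real.log (x.toReal / a.toReal))) 0 + x.toReal) :=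
      ENNReal.ofReal_le_ofReal (negPartMajorant_le_max_add _ _)
  _ ≤ klNeg x a + x := by
      grw [ENNReal.ofReal_add_le, ENNReal.ofReal_max, ENNReal.ofReal_toReal hx]
      simp [klNeg]

lemma ne_top_of_tsum_eq_one {ι : Type*} {f : ι → ℝ≥0∞} (h : ∑' i, f i = 1) (i : ι) : f i ≠ ⊤ :=
  ENNReal.ne_top_of_tsum_ne_top (h ▸ ENNReal.one_ne_top) i

def PosHomogeneous (f : ℝ≥0∞ → ℝ≥0∞ → ℝ≥0∞) : Prop :=
  ∀ x a t, t ≠ ⊤ → f (x * t) (a * t) = t * f x a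

lemma PosHomogeneous.tsum_tsum_mul {ι κ : Type*} {f : ℝ≥0∞ → ℝ≥0∞ → ℝ≥0∞}
    (hf : PosHomogeneous f) (μ π : ι → ℝ≥0∞) {p : ι → κ → ℝ≥0∞}
    (hrow : ∀ i, ∑' j, p i j = 1) :
    ∑' j, ∑' i, f (μ i * p i j) (π i * p i j) = ∑' i, f (μ i) (π i) := by
  rw [ENNReal.tsum_comm]
  refine tsum_congr fun i => ?_
  simp_rw [hf _ _ _ (ne_top_of_tsum_eq_one (hrow i) _), ENNReal.tsum_mul_right, hrow i, one_mul]

lemma posHomogeneous_ofReal {g : ℝ → ℝ → ℝ}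
    (hg : ∀ x a t, 0 ≤ t → g (x * t) (a * t) = t * g x a) :
    PosHomogeneous fun x a => ENNReal.ofReal (g x.toReal a.toReal) := by
  intro x a t ht
  simp only [ENNReal.toReal_mul, hg _ _ _ ENNReal.toReal_nonneg,
    ENNReal.ofReal_mul ENNReal.toReal_nonneg, ENNReal.ofReal_toReal ht]

lemma posHomogeneous_klPos : PosHomogeneous klPos := by
  intro x a t ht
  rcases eq_or_ne t 0 with rfl | ht₀
  · simp
  have hcond : (a * t = 0 ∧ x * t ≠ 0) ↔ (a = 0 ∧ x ≠ 0) := by simp [ht₀]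
  simp only [klPos, hcond]
  split_ifs
  · exact (ENNReal.mul_top ht₀).symm
  · exact posHomogeneous_ofReal (g := fun x a => x * Real.log (x / a))
      (fun x a t _ => mul_log_div_mul_right x a t) x a t ht

lemma posHomogeneous_klNeg : PosHomogeneous klNeg :=
  posHomogeneous_ofReal (g := fun x a => -(x * Real.log (x / a))) fun x a t _ => by
    rw [mul_log_div_mul_right, mul_neg]

lemma posHomogeneous_klNegMajorant : PosHomogeneous klNegMajorant :=
  posHomogeneous_ofReal fun x a _ ht => negPartMajorant_mul_right x a ht

/-- The linear function `(b₁ - b₂) x - c a` lies below `G - F` and touches it at `(n, q)`, written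
without subtraction; a coefficient `⊤` encodes a vertical supporting line on the boundary. -/
def HasSupportingLine (F G : ℝ≥0∞ → ℝ≥0∞ → ℝ≥0∞) (n q : ℝ≥0∞) : Prop :=
  ∃ b₁ b₂ c : ℝ≥0∞, (∀ x a, x ≠ ⊤ → a ≠ ⊤ → b₁ * x + F x a ≤ G x a + (b₂ * x + c * a)) ∧
    b₁ * n + F n q = G n q + (b₂ * n + c * q) ∧ b₂ * n + c * q ≠ ⊤

lemma HasSupportingLine.add_tsum_le {ι : Type*} {F G : ℝ≥0∞ → ℝ≥0∞ → ℝ≥0∞}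
    {w w' : ι → ℝ≥0∞} (hw : ∀ i, w i ≠ ⊤) (hw' : ∀ i, w' i ≠ ⊤)
    (h : HasSupportingLine F G (∑' i, w i) (∑' i, w' i)) :
    G (∑' i, w i) (∑' i, w' i) + ∑' i, F (w i) (w' i) ≤
      ∑' i, G (w i) (w' i) + F (∑' i, w i) (∑' i, w' i) := by
  obtain ⟨b₁, b₂, c, hle, htight, hfin⟩ := h
  have hsum : b₁ * ∑' i, w i + ∑' i, F (w i) (w' i) ≤
      ∑' i, G (w i) (w' i) + (b₂ * ∑' i, w i + c * ∑' i, w' i) := by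
    simpa only [ENNReal.tsum_add, ENNReal.tsum_mul_left] using
      ENNReal.tsum_le_tsum fun i => hle _ _ (hw i) (hw' i)
  rw [← ENNReal.add_le_add_iff_right hfin]
  calc _ = b₁ * ∑' i, w i + ∑' i, F (w i) (w' i) + F (∑' i, w i) (∑' i, w' i) := by
        rw [add_right_comm, ← htight]; ring
    _ ≤ _ := by grw [hsum]; exact le_of_eq (by ring)

lemma hasSupportingLine_klNeg_klPos {n q : ℝ≥0∞} (hn : n ≠ ⊤) (hq : q ≠ ⊤) :
    HasSupportingLine klNeg klPos n q := by
  rcases eq_or_ne n 0 with rfl | hn₀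
  · refine ⟨0, ⊤, 0, fun x a _ _ => ?_, by simp, by simp⟩
    rcases eq_or_ne x 0 with rfl | hx₀
    · simp
    · simp [ENNReal.top_mul hx₀]
  rcases eq_or_ne q 0 with rfl | hq₀
  · refine ⟨⊤, 0, ⊤, fun x a _ _ => ?_, by simp [klPos, hn₀, ENNReal.top_mul hn₀], by simp⟩
    rcases eq_or_ne x 0 with rfl | hx₀
    · simp
    rcases eq_or_ne a 0 with rfl | ha₀
    · simp [klPos, hx₀]
    · simp [ENNReal.top_mul ha₀]
  set y := n.toReal / q.toReal
  have hq' : 0 < q.toReal := ENNReal.toReal_pos hq₀ hq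
  have hy : 0 < y := div_pos (ENNReal.toReal_pos hn₀ hn) hq'
  refine ⟨ENNReal.ofReal (Real.log y + 1), ENNReal.ofReal (-(Real.log y + 1)), ENNReal.ofReal y,
    fun x a hx ha => ?_, ?_, by finiteness⟩
  · by_cases hxa : a = 0 ∧ x ≠ 0
    · simp [klPos, hxa]
    rw [klPos, if_neg hxa, klNeg, ofReal_mul_of_ne_top _ hx, ofReal_mul_of_ne_top _ hx,
      ofReal_mul_of_ne_top _ ha, neg_mul]
    refine ofReal_add_ofReal_neg_le (sub_le_mul_log_div ENNReal.toReal_nonneg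
      ENNReal.toReal_nonneg hy fun ha₀ => ?_)
    simp_all [ENNReal.toReal_eq_zero_iff]
  · rw [klPos, if_neg (by simp [hq₀]), klNeg, ofReal_mul_of_ne_top _ hn,
      ofReal_mul_of_ne_top _ hn, ofReal_mul_of_ne_top _ hq, neg_mul]
    refine ofReal_add_ofReal_neg_eq (by positivity) ?_
    simp only [y]; field_simp; ring

lemma hasSupportingLine_klNegMajorant {n q : ℝ≥0∞} (hn : n ≠ ⊤) (hq : q ≠ ⊤) :
    HasSupportingLine klNegMajorant 0 n q := by
  rcases eq_or_ne n 0 with rfl | hn₀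
  · refine ⟨0, ⊤, 0, fun x a _ _ => ?_, by simp, by simp⟩
    rcases eq_or_ne x 0 with rfl | hx₀
    · simp
    · simp [ENNReal.top_mul hx₀]
  have hn' : 0 < n.toReal := ENNReal.toReal_pos hn₀ hn
  rcases le_or_gt n.toReal q.toReal with hnq | hqn
  · have hlog : 0 ≤ Real.log (q.toReal / n.toReal) :=
      Real.log_nonneg ((one_le_div hn').2 hnq)
    refine ⟨0, ENNReal.ofReal (Real.log (q.toReal / n.toReal)),
      ENNReal.ofReal (n.toReal / q.toReal), fun x a hx ha => ?_, ?_, by finiteness⟩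
    · rw [Pi.zero_apply, Pi.zero_apply, zero_mul, zero_add, zero_add, ofReal_mul_of_ne_top _ hx,
        ofReal_mul_of_ne_top _ ha, ← ENNReal.ofReal_add (by positivity) (by positivity)]
      exact ENNReal.ofReal_le_ofReal <|
        negPartMajorant_le_of_le ENNReal.toReal_nonneg ENNReal.toReal_nonneg hn' hnq
    · rw [Pi.zero_apply, Pi.zero_apply, zero_mul, zero_add, zero_add, ofReal_mul_of_ne_top _ hn,
        ofReal_mul_of_ne_top _ hq, ← ENNReal.ofReal_add (by positivity) (by positivity),
        klNegMajorant, negPartMajorant, if_pos hnq]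
      have hq' : 0 < q.toReal := hn'.trans_le hnq
      congr 1
      field_simp
      ring
  · refine ⟨0, 0, 1, fun x a _ ha => ?_, ?_, by simpa⟩
    · simpa [klNegMajorant] using
        ENNReal.ofReal_le_of_le_toReal (negPartMajorant_le_right ENNReal.toReal_nonneg)
    · simp [klNegMajorant, negPartMajorant, hqn.not_ge, hq]

lemma coe_sub_coe_le_coe_sub_coe {A B A' B' : ℝ≥0∞} (h : A' + B ≤ A + B')
    (htop : B = ⊤ → B' = ⊤) : (A' : EReal) - B' ≤ A - B := by
  rcases eq_or_ne B' ⊤ with hB' | hB'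
  · simp [hB']
  have hB : B ≠ ⊤ := mt htop hB'
  rcases eq_or_ne A ⊤ with hA | hA
  · simp [hA, ← EReal.coe_ennreal_toReal hB]
  have hA' : A' ≠ ⊤ := ne_top_of_le_ne_top (by finiteness) (le_self_add.trans h)
  rw [← EReal.coe_ennreal_toReal hA, ← EReal.coe_ennreal_toReal hB,
    ← EReal.coe_ennreal_toReal hA', ← EReal.coe_ennreal_toReal hB', ← EReal.coe_sub,
    ← EReal.coe_sub, EReal.coe_le_coe_iff]
  have := ENNReal.toReal_mono (by finiteness) h
  rw [ENNReal.toReal_add hA' hB, ENNReal.toReal_add hA hB'] at this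
  linarith

section Kernel

variable {ι κ : Type*} {μ π : ι → ℝ≥0∞} {ν π' : κ → ℝ≥0∞} {p : ι → κ → ℝ≥0∞}

lemma tsum_klPos_add_tsum_klNeg_le (hμ : ∀ i, μ i ≠ ⊤) (hπ : ∀ i, π i ≠ ⊤)
    (hν : ∀ j, ν j ≠ ⊤) (hπ' : ∀ j, π' j ≠ ⊤) (hrow : ∀ i, ∑' j, p i j = 1)
    (hμν : ∀ j, ∑' i, μ i * p i j = ν j) (hππ' : ∀ j, ∑' i, π i * p i j = π' j) :
    ∑' j, klPos (ν j) (π' j) + ∑' i, klNeg (μ i) (π i) ≤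
      ∑' i, klPos (μ i) (π i) + ∑' j, klNeg (ν j) (π' j) := by
  have hcol (j : κ) : klPos (ν j) (π' j) + ∑' i, klNeg (μ i * p i j) (π i * p i j) ≤
      ∑' i, klPos (μ i * p i j) (π i * p i j) + klNeg (ν j) (π' j) := by
    have hsupp := hasSupportingLine_klNeg_klPos (hν j) (hπ' j)
    rw [← hμν j, ← hππ' j] at hsupp ⊢
    exact hsupp.add_tsum_le (fun i => ENNReal.mul_ne_top (hμ i) (ne_top_of_tsum_eq_one (hrow i) j))
      (fun i => ENNReal.mul_ne_top (hπ i) (ne_top_of_tsum_eq_one (hrow i) j))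
  simpa only [ENNReal.tsum_add, posHomogeneous_klPos.tsum_tsum_mul μ π hrow,
    posHomogeneous_klNeg.tsum_tsum_mul μ π hrow] using ENNReal.tsum_le_tsum hcol

lemma tsum_klNeg_le_tsum_klNeg_add (hμ : ∀ i, μ i ≠ ⊤) (hπ : ∀ i, π i ≠ ⊤)
    (hν : ∀ j, ν j ≠ ⊤) (hπ' : ∀ j, π' j ≠ ⊤) (hrow : ∀ i, ∑' j, p i j = 1)
    (hμν : ∀ j, ∑' i, μ i * p i j = ν j) (hππ' : ∀ j, ∑' i, π i * p i j = π' j) :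
    ∑' i, klNeg (μ i) (π i) ≤ ∑' j, klNeg (ν j) (π' j) + ∑' j, ν j := by
  have hcol (j : κ) :
      ∑' i, klNegMajorant (μ i * p i j) (π i * p i j) ≤ klNegMajorant (ν j) (π' j) := by
    have hsupp := hasSupportingLine_klNegMajorant (hν j) (hπ' j)
    rw [← hμν j, ← hππ' j] at hsupp ⊢
    simpa using hsupp.add_tsum_le
      (fun i => ENNReal.mul_ne_top (hμ i) (ne_top_of_tsum_eq_one (hrow i) j))
      (fun i => ENNReal.mul_ne_top (hπ i) (ne_top_of_tsum_eq_one (hrow i) j))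
  calc ∑' i, klNeg (μ i) (π i)
      ≤ ∑' i, klNegMajorant (μ i) (π i) :=
        ENNReal.tsum_le_tsum fun i => klNeg_le_klNegMajorant _ _
    _ = ∑' j, ∑' i, klNegMajorant (μ i * p i j) (π i * p i j) :=
        (posHomogeneous_klNegMajorant.tsum_tsum_mul μ π hrow).symm
    _ ≤ ∑' j, klNegMajorant (ν j) (π' j) := ENNReal.tsum_le_tsum hcol
    _ ≤ ∑' j, (klNeg (ν j) (π' j) + ν j) :=
        ENNReal.tsum_le_tsum fun j => klNegMajorant_le_klNeg_add (hν j) _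
    _ = _ := ENNReal.tsum_add

end Kernel

end SecondLaw

theorem second_law_stochastic_general {S : Type*} (π : S → ℝ≥0∞)
    (hfin : ∀ s, π s ≠ ⊤)
    (μ ν : PMF S) (p : S → S → ℝ≥0∞)
    (hrow : ∀ s, ∑' s', p s s' = 1)
    (hstat : ∀ s, ∑' s', π s' * p s' s = π s)
    (htrans : ∀ s, ∑' s', μ s' * p s' s = ν s) :
    klDiv (⇑ν) π ≤ klDiv (⇑μ) π := by
  open SecondLaw in
  rw [klDiv_eq_tsum_klPos_sub_tsum_klNeg, klDiv_eq_tsum_klPos_sub_tsum_klNeg]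
  refine coe_sub_coe_le_coe_sub_coe (tsum_klPos_add_tsum_klNeg_le μ.apply_ne_top hfin
    ν.apply_ne_top hfin hrow htrans hstat) fun hμ_top => ?_
  have hneg := tsum_klNeg_le_tsum_klNeg_add μ.apply_ne_top hfin ν.apply_ne_top hfin hrow htrans hstat
  rw [hμ_top, ν.tsum_coe, top_le_iff] at hneg
  simpa using hneg

/-- Second law of thermodynamics for stochastic matrices: if `μ, ν` are probability measures
on a countable set `S`, `π ∈ M₊(S)`, and there is a `π`-stochastic matrix `p` (rows sum to 1,
`π` stationary) transforming `μ` into `ν`, then `D(μ‖π) ≥ D(ν‖π)`. -/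
theorem second_law_stochastic {S : Type*} [Countable S] (π : S → ℝ≥0∞)
    (hfin : ∀ s, π s ≠ ⊤) (hne : ∃ s, π s ≠ 0)
    (μ ν : PMF S) (p : S → S → ℝ≥0∞)
    (hrow : ∀ s, ∑' s', p s s' = 1)
    (hstat : ∀ s, ∑' s', π s' * p s' s = π s)
    (htrans : ∀ s, ∑' s', μ s' * p s' s = ν s) :
    klDiv (⇑ν) π ≤ klDiv (⇑μ) π :=
  second_law_stochastic_general π hfin μ ν p hrow hstat htrans
end

section
/- Every m-sided doubly stochastic matrix on a countable set S is a uniform mixture of m bijections: if p is doubly stochastic with all entries multiples of 1/m, then there exist bijections f₁,…,f_m of S such that p(s,s') = (1/m)·#{i : f_i(s) = s'}. -/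
open scoped ENNReal
open Finset Function

/-! Clearing denominators turns `p` into an `m`-regular bipartite multigraph `k` (`p = k / m`).
In such a graph a finite set `A` of vertices on one side sends out `m * #A` edges, which land on
its neighbourhood `N(A)`, where at most `m * #N(A)` edges arrive; so Hall's condition holds, and
since neighbourhoods of single vertices are finite, the infinite Hall theorem gives injections along edges in both directions. Schröder–Bernstein
along the edge relation merges them into a perfect matching; removing it leaves an
`(m - 1)`-regular multigraph, and induction on `m` finishes. -/

section

variable {α β : Type*}

lemma finite_setOf_natCast_ne_zero_of_tsum_ne_top {k : β → ℕ} (h : ∑' b, (k b : ℝ≥0∞) ≠ ∞) :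
    {b | k b ≠ 0}.Finite :=
  (ENNReal.finite_const_le_of_tsum_ne_top h one_ne_zero).subset fun b hb => by
    simpa [Nat.one_le_iff_ne_zero] using hb

lemma exists_injective_forall_ne_zero_of_tsum_eq {n : ℕ} (hn : n ≠ 0) (k : α → β → ℕ)
    (hrow : ∀ a, ∑' b, (k a b : ℝ≥0∞) = n) (hcol : ∀ b, ∑' a, (k a b : ℝ≥0∞) ≤ n) :
    ∃ f : α → β, Injective f ∧ ∀ a, k a (f a) ≠ 0 := by
  classical
  have hfin a : {b | k a b ≠ 0}.Finite :=
    finite_setOf_natCast_ne_zero_of_tsum_ne_top (by simp [hrow a])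
  let N a := (hfin a).toFinset
  suffices hall : ∀ A : Finset α, #A ≤ #(A.biUnion N) by
    obtain ⟨f, hf, hfN⟩ := (all_card_le_biUnion_card_iff_exists_injective N).mp hall
    exact ⟨f, hf, fun a => by simpa [N] using hfN a⟩
  intro A
  set B := A.biUnion N
  have hrowB : ∀ a ∈ A, ∑' b, (k a b : ℝ≥0∞) = ∑ b ∈ B, (k a b : ℝ≥0∞) := fun a ha =>
    tsum_eq_sum fun b hb => by
      have : b ∉ N a := fun hbN => hb (mem_biUnion.mpr ⟨a, ha, hbN⟩)
      simpa [N] using this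
  have : (n : ℝ≥0∞) * #A ≤ n * #B := calc
    (n : ℝ≥0∞) * #A = ∑ a ∈ A, ∑' b, (k a b : ℝ≥0∞) := by simp [hrow, mul_comm]
    _ = ∑ b ∈ B, ∑ a ∈ A, (k a b : ℝ≥0∞) := by rw [sum_congr rfl hrowB, sum_comm]
    _ ≤ ∑ b ∈ B, ∑' a, (k a b : ℝ≥0∞) := sum_le_sum fun b _ => ENNReal.sum_le_tsum A
    _ ≤ n * #B := by simpa [mul_comm] using sum_le_sum fun b (_ : b ∈ B) => hcol b
  exact_mod_cast (ENNReal.mul_le_mul_iff_right (by simpa) (ENNReal.natCast_ne_top n)).mp this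

lemma exists_equiv_forall_ne_zero_of_tsum_eq {n : ℕ} (hn : n ≠ 0) (k : α → β → ℕ)
    (hrow : ∀ a, ∑' b, (k a b : ℝ≥0∞) = n) (hcol : ∀ b, ∑' a, (k a b : ℝ≥0∞) = n) :
    ∃ e : α ≃ β, ∀ a, k a (e a) ≠ 0 := by
  obtain ⟨f, hf, hfk⟩ := exists_injective_forall_ne_zero_of_tsum_eq hn k hrow (hcol · |>.le)
  obtain ⟨g, hg, hgk⟩ :=
    exists_injective_forall_ne_zero_of_tsum_eq hn (flip k) hcol (hrow · |>.le)
  obtain ⟨e, he, hek⟩ := Embedding.schroeder_bernstein_of_rel hf hg (k · · ≠ 0) hfk hgk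
  exact ⟨Equiv.ofBijective e he, hek⟩

lemma tsum_natCast_eq_of_add_ite_eq [DecidableEq β] {n : ℕ} {k k' : β → ℕ} {b₀ : β}
    (hk : ∀ b, k' b + (if b = b₀ then 1 else 0) = k b) (h : ∑' b, (k b : ℝ≥0∞) = n + 1) :
    ∑' b, (k' b : ℝ≥0∞) = n := by
  refine (ENNReal.add_left_inj ENNReal.one_ne_top).mp ?_
  calc ∑' b, (k' b : ℝ≥0∞) + 1
      = ∑' b, ((k' b : ℝ≥0∞) + if b = b₀ then 1 else 0) := by rw [ENNReal.tsum_add, tsum_ite_eq]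
    _ = ∑' b, (k b : ℝ≥0∞) := tsum_congr fun b => by rw [← hk]; push_cast; rfl
    _ = n + 1 := h

theorem exists_equivs_natCard_eq_of_tsum_eq (n : ℕ) (k : α → β → ℕ)
    (hrow : ∀ a, ∑' b, (k a b : ℝ≥0∞) = n) (hcol : ∀ b, ∑' a, (k a b : ℝ≥0∞) = n) :
    ∃ f : Fin n → α ≃ β, ∀ a b, k a b = Nat.card {i // f i a = b} := by
  classical
  induction n generalizing k with
  | zero =>
    refine ⟨finZeroElim, fun a b => ?_⟩
    have hk : ∀ b, k a b = 0 := by simpa using hrow a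
    simp [hk]
  | succ n ih =>
    obtain ⟨σ, hσ⟩ := exists_equiv_forall_ne_zero_of_tsum_eq n.succ_ne_zero k hrow hcol
    set k' : α → β → ℕ := fun a b => k a b - if σ a = b then 1 else 0
    have hk' a b : k' a b + (if σ a = b then 1 else 0) = k a b := by
      refine Nat.sub_add_cancel ?_
      split_ifs with h
      · exact Nat.one_le_iff_ne_zero.mpr (h ▸ hσ a)
      · exact Nat.zero_le _
    obtain ⟨F, hF⟩ := ih k'
      (fun a => tsum_natCast_eq_of_add_ite_eq (b₀ := σ a)
        (by simpa only [@eq_comm _ (σ a)] using hk' a) (by exact_mod_cast hrow a))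
      (fun b => tsum_natCast_eq_of_add_ite_eq (b₀ := σ.symm b)
        (by simpa only [← Equiv.eq_symm_apply] using (hk' · b)) (by exact_mod_cast hcol b))
    refine ⟨Fin.cons σ F, fun a b => ?_⟩
    rw [← hk', hF, Nat.card_eq_fintype_card, Nat.card_eq_fintype_card, Fintype.card_subtype,
      Fintype.card_subtype, Fin.card_filter_univ_succ']
    simp only [Fin.cons_zero, Fin.cons_succ, add_comm]

end

theorem m_sided_doubly_stochastic_mixture_of_bijections_general {S : Type*}
    (m : ℕ) (hm : 0 < m) (p : S → S → ℝ≥0∞)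
    (hrow : ∀ s, ∑' s', p s s' = 1) (hcol : ∀ s', ∑' s, p s s' = 1)
    (hside : ∀ s s', ∃ k : ℕ, p s s' = (k : ℝ≥0∞) / (m : ℝ≥0∞)) :
    ∃ f : Fin m → Equiv.Perm S, ∀ s s',
      p s s' = (Nat.card {i : Fin m // f i s = s'} : ℝ≥0∞) / (m : ℝ≥0∞) := by
  choose k hk using hside
  have tsum_natCast_eq (t : S → ℕ) (ht : ∑' s, (t s : ℝ≥0∞) / m = 1) :
      ∑' s, (t s : ℝ≥0∞) = m := by
    rw [← ENNReal.div_eq_one_iff (by exact_mod_cast hm.ne') (ENNReal.natCast_ne_top m)]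
    simpa only [div_eq_mul_inv, ENNReal.tsum_mul_right] using ht
  obtain ⟨f, hf⟩ := exists_equivs_natCard_eq_of_tsum_eq m k
    (fun s => tsum_natCast_eq _ (by simpa only [hk] using hrow s))
    (fun s' => tsum_natCast_eq _ (by simpa only [hk] using hcol s'))
  exact ⟨f, fun s s' => by rw [hk, hf]⟩

/-- Every `m`-sided doubly stochastic matrix on a countable set `S` is a uniform mixture of
`m` bijections: if `p` is doubly stochastic with all entries multiples of `1/m`, then there
are bijections `f 0, …, f (m−1)` of `S` with `p(s,s') = #{i | f i s = s'} / m`. -/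
theorem m_sided_doubly_stochastic_mixture_of_bijections {S : Type*} [Countable S]
    (m : ℕ) (hm : 0 < m) (p : S → S → ℝ≥0∞)
    (hrow : ∀ s, ∑' s', p s s' = 1) (hcol : ∀ s', ∑' s, p s s' = 1)
    (hside : ∀ s s', ∃ k : ℕ, p s s' = (k : ℝ≥0∞) / (m : ℝ≥0∞)) :
    ∃ f : Fin m → Equiv.Perm S, ∀ s s',
      p s s' = (Nat.card {i : Fin m // f i s = s'} : ℝ≥0∞) / (m : ℝ≥0∞) :=
  m_sided_doubly_stochastic_mixture_of_bijections_general m hm p hrow hcol hside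
end
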